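/- If 1 is an eigenvalue of A, then its eigenspace {x ∈ W^⊥ : A x = x} is one-dimensional (the eigenvalue 1 has multiplicity 1). -/

import Mathlib

noncomputable section

/-- The Minkowski bilinear form of index 1 on `ℝ^{n+2}`:
`B x y = ∑_{i=0}^{n} x i * y i − x (n+1) * y (n+1)`. -/
def mB (n : ℕ) : (Fin (n+2) → ℝ) →ₗ[ℝ] (Fin (n+2) → ℝ) →ₗ[ℝ] ℝ :=
  LinearMap.mk₂ ℝ
    (fun x y => ∑ i : Fin (n+2), (if (i : ℕ) = n+1 then (-1:ℝ) else 1) * x i * y i)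
    (fun x x' y => by
      rw [← Finset.sum_add_distrib]
      exact Finset.sum_congr rfl fun i _ => by simp only [Pi.add_apply]; ring)
    (fun c x y => by
      rw [smul_eq_mul, Finset.mul_sum]
      exact Finset.sum_congr rfl fun i _ => by simp only [Pi.smul_apply, smul_eq_mul]; ring)
    (fun x y y' => by
      rw [← Finset.sum_add_distrib]
      exact Finset.sum_congr rfl fun i _ => by simp only [Pi.add_apply]; ring)
    (fun c x y => by
      rw [smul_eq_mul, Finset.mul_sum]
      exact Finset.sum_congr rfl fun i _ => by simp only [Pi.smul_apply, smul_eq_mul]; ring)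

/-- The orthogonal complement `S^⊥ = {x | ∀ s ∈ S, B x s = 0}` w.r.t. the Minkowski form. -/
def mperp (n : ℕ) (S : Submodule ℝ (Fin (n+2) → ℝ)) : Submodule ℝ (Fin (n+2) → ℝ) where
  carrier := {x | ∀ s ∈ S, mB n x s = 0}
  zero_mem' := fun s _ => by simp
  add_mem' := fun ha hb s hs => by simp [ha s hs, hb s hs]
  smul_mem' := fun c a ha s hs => by simp [ha s hs]

/-- A subspace is pseudo-euclidean if the Minkowski form restricted to it
is nondegenerate and it contains a timelike vector. -/
def IsPseudoEuclidean (n : ℕ) (S : Submodule ℝ (Fin (n+2) → ℝ)) : Prop :=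
  (∀ x ∈ S, (∀ y ∈ S, mB n x y = 0) → x = 0) ∧ ∃ x ∈ S, mB n x x < 0

lemma mB_apply (n : ℕ) (x y : Fin (n+2) → ℝ) :
    mB n x y = ∑ i : Fin (n+2), (if (i:ℕ) = n+1 then (-1:ℝ) else 1) * x i * y i := rfl

lemma mB_symm (n : ℕ) (x y : Fin (n+2) → ℝ) : mB n x y = mB n y x := by
  simp only [mB_apply]; exact Finset.sum_congr rfl fun i _ => by ring

lemma mB_self_eq_zero (n : ℕ) (y : Fin (n+2) → ℝ)
    (h : mB n y y = 0) (hl : y ⟨n+1, by omega⟩ = 0) : y = 0 := by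
  have key : ∀ i : Fin (n+2), (if (i:ℕ) = n+1 then (-1:ℝ) else 1) * y i * y i = y i * y i := by
    intro i
    by_cases hi : (i:ℕ) = n+1
    · have : i = ⟨n+1, by omega⟩ := Fin.ext hi
      simp [this, hl]
    · simp [hi]
  rw [mB_apply] at h
  simp_rw [key] at h
  have h2 := (Finset.sum_eq_zero_iff_of_nonneg (fun i _ => mul_self_nonneg (y i))).mp h
  funext i
  exact mul_self_eq_zero.mp (h2 i (Finset.mem_univ i))

lemma mB_nondeg (n : ℕ) (x : Fin (n+2) → ℝ) (h : ∀ s, mB n x s = 0) : x = 0 := by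
  funext i
  have hi := h (Pi.single i 1)
  rw [mB_apply, Finset.sum_eq_single i] at hi
  · by_cases hc : (i:ℕ) = n+1 <;> simp [hc] at hi <;> simpa using hi
  · intro b _ hb; simp [Pi.single_eq_of_ne hb]
  · simp

lemma isotropic_dep (n : ℕ) (y₁ y₂ : Fin (n+2) → ℝ) (h1 : y₁ ≠ 0)
    (h11 : mB n y₁ y₁ = 0) (h22 : mB n y₂ y₂ = 0) (h12 : mB n y₁ y₂ = 0) :
    ∃ c : ℝ, y₂ = c • y₁ := by
  set L : Fin (n+2) := ⟨n+1, by omega⟩ with hL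
  have hl1 : y₁ L ≠ 0 := fun h => h1 (mB_self_eq_zero n y₁ h11 h)
  refine ⟨y₂ L / y₁ L, ?_⟩
  set c := y₂ L / y₁ L with hc
  set z := y₂ - c • y₁ with hz
  have hzL : z L = 0 := by
    simp only [hz, Pi.sub_apply, Pi.smul_apply, smul_eq_mul, hc]
    field_simp
    ring
  have h21 : mB n y₂ y₁ = 0 := by rw [mB_symm]; exact h12
  have hzz : mB n z z = 0 := by
    simp only [hz, map_sub, map_smul, LinearMap.sub_apply, LinearMap.smul_apply,
      smul_eq_mul, h11, h22, h12, h21]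
    ring
  have hz0 : z = 0 := mB_self_eq_zero n z hzz hzL
  rw [← sub_eq_zero]; exact hz0

/-- If `1` is an eigenvalue of `A`, then its eigenspace in `W^⊥` is
one-dimensional (the eigenvalue `1` has multiplicity `1`). -/
theorem eigenvalue_one_simple
    (n : ℕ) (hn : 0 < n) (W U : Submodule ℝ (Fin (n+2) → ℝ))
    (hW : IsPseudoEuclidean n W) (hU : IsPseudoEuclidean n U)
    (hsum : W ⊔ U = ⊤)
    (p p' : (Fin (n+2) → ℝ) →ₗ[ℝ] (Fin (n+2) → ℝ))
    (hp : ∀ x, p x ∈ mperp n U ∧ x - p x ∈ U)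
    (hp' : ∀ x, p' x ∈ mperp n W ∧ x - p' x ∈ W)
    (hWtop : W ≠ ⊤)
    (heig : ∃ v ∈ mperp n W, v ≠ 0 ∧ p' (p v) = v) :
    Module.finrank ℝ
      ↥(LinearMap.ker (p' ∘ₗ p - (1:ℝ) • LinearMap.id) ⊓ mperp n W) = 1 := by
  obtain ⟨v, hvW, hv0, hvfix⟩ := heig
  set E := LinearMap.ker (p' ∘ₗ p - (1:ℝ) • LinearMap.id) ⊓ mperp n W with hE
  have memE : ∀ x, x ∈ E ↔ (p' (p x) = x ∧ x ∈ mperp n W) := by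
    intro x
    rw [hE, Submodule.mem_inf, LinearMap.mem_ker, LinearMap.sub_apply, LinearMap.comp_apply,
      LinearMap.smul_apply, LinearMap.id_apply, one_smul, sub_eq_zero]
  have inj : ∀ x, x ∈ mperp n W → x ∈ mperp n U → x = 0 := by
    intro x hxW hxU
    apply mB_nondeg n
    intro s
    have hs : s ∈ W ⊔ U := by rw [hsum]; exact Submodule.mem_top
    obtain ⟨w, hw, u, hu, rfl⟩ := Submodule.mem_sup.mp hs
    rw [map_add, hxW w hw, hxU u hu, add_zero]
  have yW : ∀ x, x ∈ E → x - p x ∈ W := by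
    intro x hx
    have hfix := ((memE x).mp hx).1
    have h := (hp' (p x)).2
    rw [hfix] at h
    have := W.neg_mem h
    rwa [neg_sub] at this
  have yU : ∀ x, x - p x ∈ U := fun x => (hp x).2
  have orth : ∀ x z, x ∈ E → z ∈ E → mB n (x - p x) (z - p z) = 0 := by
    intro x z hx hz
    have h1 : mB n x (z - p z) = 0 := ((memE x).mp hx).2 _ (yW z hz)
    have h2 : mB n (p x) (z - p z) = 0 := (hp x).1 _ (yU z)
    rw [(mB n).map_sub, LinearMap.sub_apply, h1, h2, sub_zero]
  have hvE : v ∈ E := (memE v).mpr ⟨hvfix, hvW⟩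
  have yv0 : v - p v ≠ 0 := by
    intro h
    apply hv0
    have hvp : v = p v := by rwa [sub_eq_zero] at h
    exact inj v hvW (hvp ▸ (hp v).1)
  have key : ∀ x ∈ E, x ∈ Submodule.span ℝ {v} := by
    intro x hx
    obtain ⟨c, hcc⟩ := isotropic_dep n (v - p v) (x - p x) yv0
      (orth v v hvE hvE) (orth x x hx hx) (orth v x hvE hx)
    have hE2 : x - c • v ∈ E := E.sub_mem hx (E.smul_mem c hvE)
    have hy : (x - c • v) - p (x - c • v) = 0 := by
      have hrw : (x - c • v) - p (x - c • v) = (x - p x) - c • (v - p v) := by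
        rw [map_sub, map_smul, smul_sub]; abel
      rw [hrw, hcc, sub_self]
    have hfx : x - c • v = p (x - c • v) := by rwa [sub_eq_zero] at hy
    have hxU : x - c • v ∈ mperp n U := hfx ▸ (hp (x - c • v)).1
    have h0 : x - c • v = 0 := inj _ ((memE _).mp hE2).2 hxU
    have hxc : x = c • v := by rwa [sub_eq_zero] at h0
    rw [hxc]
    exact Submodule.smul_mem _ _ (Submodule.mem_span_singleton_self v)
  have hEspan : E = Submodule.span ℝ {v} :=
    le_antisymm key (Submodule.span_le.mpr (by simpa using hvE))
  rw [hEspan]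
  exact finrank_span_singleton hv0
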